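/- arXiv:1202.6648 — 2 statements merged into one kernel-verified Lean document; each statement's English description precedes it below -/
import Mathlib

section
/- A dominant region R of the m-Shi arrangement of type A_{n−1}, with Shi tableau {e_{ij}}, has the hyperplane H_{α_{uv}, m} as a separating wall if and only if e_{uv} = m and e_{ut} + e_{t+1,v} = m − 1 for all t with u ≤ t < v. -/
/-!
A generic point `p` of a facet on `H_{α_{uv}, m}` lies, for every other positive root `α_{ij}`,
in the same open cell (an interval between consecutive levels `0, …, m`, or the ray above `m`)
as the region. As `⟨p, α_{ut}⟩ + ⟨p, α_{t+1,v}⟩ = m` with both terms positive, both cells are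
bounded and their lower ends add up to `m - 1`.

Conversely we look for `p` with `p_u - p_{v+1} = m` and every other difference `p_k - p_l` in
the cell of `x_k - x_l`. On the coordinates `u, …, v+1` the criterion says exactly that moving
`x_{v+1}` to `x_u - m` works. The remaining coordinates are added one at a time: the new
coordinate must lie in a finite family of intervals, which meet pairwise because floors are
additive up to one, so they have a common point by Helly's theorem on the line.
-/

open Finset

namespace Shi

/-- Inner product of `x` with the positive root `α_{ij} = e_i - e_{j+1}` (0-indexed
`i ≤ j ≤ n-2`). -/
def inn (x : ℕ → ℝ) (i j : ℕ) : ℝ := x i - x (j + 1)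

def SumZero (n : ℕ) (x : ℕ → ℝ) : Prop := ∑ i ∈ Finset.range n, x i = 0

/-- `x` is a point of the type `A_{n-1}` ambient space lying in the open dominant chamber
and on no hyperplane of the `m`-Shi arrangement, hence an interior point of a dominant
`m`-Shi region. -/
def RegionPoint (n m : ℕ) (x : ℕ → ℝ) : Prop :=
  SumZero n x ∧
  (∀ i j, i ≤ j → j + 2 ≤ n → 0 < inn x i j) ∧
  (∀ i j, i ≤ j → j + 2 ≤ n → ∀ t : ℤ, -(m : ℤ) < t → t ≤ m → inn x i j ≠ (t : ℝ))

/-- `e` is the Shi tableau of the dominant `m`-Shi region containing `x`: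
`e_{ij} = min(⌊⟨x, α_{ij}⟩⌋, m)`, which is constant on the region and equals
`min(k_{ij}, m)` for the Shi coordinates `k` of the `m`-minimal alcove of the region. -/
def TabOf (n m : ℕ) (x : ℕ → ℝ) (e : ℕ → ℕ → ℤ) : Prop :=
  ∀ i j, i ≤ j → j + 2 ≤ n → e i j = min ⌊inn x i j⌋ (m : ℤ)

/-- `e` is the Shi tableau of some dominant region of the `m`-Shi arrangement of type
`A_{n-1}`. -/
def IsShiTab (n m : ℕ) (e : ℕ → ℕ → ℤ) : Prop :=
  ∃ x, RegionPoint n m x ∧ TabOf n m x e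

/-- `p` lies in the closure of the `m`-Shi region containing `x`. -/
def InClosure (n m : ℕ) (x p : ℕ → ℝ) : Prop :=
  SumZero n p ∧ ∀ i j, i ≤ j → j + 2 ≤ n → ∀ t : ℤ, -(m : ℤ) < t → t ≤ m →
    (((t : ℝ) < inn x i j → (t : ℝ) ≤ inn p i j) ∧ (inn x i j < t → inn p i j ≤ t))

/-- The hyperplane `H_{α_{uv}, m}` is a separating wall for the dominant `m`-Shi region
containing `x`: the region lies on the far side of the hyperplane from the fundamental
alcove, and the closure of the region contains a point of the hyperplane lying on no other
hyperplane of the arrangement (so the hyperplane supports a facet). -/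
def SepWall (n m : ℕ) (x : ℕ → ℝ) (u v : ℕ) : Prop :=
  (m : ℝ) < inn x u v ∧
  ∃ p, InClosure n m x p ∧ inn p u v = (m : ℝ) ∧
    ∀ i j, i ≤ j → j + 2 ≤ n → ∀ t : ℤ, -(m : ℤ) < t → t ≤ m →
      ¬(i = u ∧ j = v ∧ t = (m : ℤ)) → inn p i j ≠ (t : ℝ)

/-- The combinatorial criterion for `H_{α_{uv}, m}` to be a separating wall. -/
def SepCrit (m : ℕ) (e : ℕ → ℕ → ℤ) (u v : ℕ) : Prop :=
  e u v = (m : ℤ) ∧ ∀ t, u ≤ t → t < v → e u t + e (t + 1) v = (m : ℤ) - 1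

/-- The region with Shi tableau `e` has `H_{α_{uv}, m}` as a separating wall. -/
def SepWallTab (n m : ℕ) (e : ℕ → ℕ → ℤ) (u v : ℕ) : Prop :=
  ∃ x, RegionPoint n m x ∧ TabOf n m x e ∧ SepWall n m x u v

/-- A tableau function normalized to be `0` outside the staircase index domain. -/
def Normalized (n : ℕ) (e : ℕ → ℕ → ℤ) : Prop :=
  ∀ i j, ¬(i ≤ j ∧ j + 2 ≤ n) → e i j = 0

noncomputable def tab (m : ℕ) (a : ℝ) : ℤ := min ⌊a⌋ m

/-- For a positive root value `a` lying on no hyperplane of the arrangement, `cell m a` is the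
open interval between consecutive levels `0, 1, …, m` containing `a` (unbounded when `a > m`). -/
def cell (m : ℕ) (a : ℝ) : Set ℝ :=
  {d | (tab m a : ℝ) < d ∧ (tab m a < m → d < tab m a + 1)}

section Cell

variable {m : ℕ} {a b d d' : ℝ}

lemma tab_le : tab m a ≤ m := min_le_right _ _

lemma tab_nonneg (ha : 0 ≤ a) : 0 ≤ tab m a :=
  le_min (Int.floor_nonneg.2 ha) (Int.natCast_nonneg m)

lemma tab_le_floor : tab m a ≤ ⌊a⌋ := min_le_left _ _

lemma tab_eq_floor (h : tab m a < m) : tab m a = ⌊a⌋ := by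
  unfold tab at *; omega

lemma tab_eq_iff : tab m a = m ↔ (m : ℝ) ≤ a := by
  rw [tab, min_eq_right_iff, Int.le_floor, Int.cast_natCast]

lemma tab_lt_iff : tab m a < m ↔ a < m :=
  ⟨fun h => not_le.1 fun h' => h.ne (tab_eq_iff.2 h'),
    fun h => tab_le.lt_of_ne fun h' => (tab_eq_iff.1 h').not_gt h⟩

lemma mem_cell_of_lt (h : a < m) : d ∈ cell m a ↔ (⌊a⌋ : ℝ) < d ∧ d < ⌊a⌋ + 1 := by
  have h' := tab_lt_iff.2 h
  rw [cell, Set.mem_ofPred_eq, imp_iff_right h', tab_eq_floor h']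

lemma mem_cell_of_le (h : (m : ℝ) ≤ a) : d ∈ cell m a ↔ (m : ℝ) < d := by
  simp [cell, tab_eq_iff.2 h]

lemma cell_ordConnected : (cell m a).OrdConnected :=
  ⟨fun _ hy _ hz _ hw => ⟨hy.1.trans_le hw.1, fun h => hw.2.trans_lt (hz.2 h)⟩⟩

lemma mem_cell_self (hm : 1 ≤ m) (ha : 0 < a)
    (hgen : ∀ t : ℤ, -(m : ℤ) < t → t ≤ m → a ≠ t) : a ∈ cell m a := by
  have hT : ((tab m a : ℤ) : ℝ) ≤ a := (Int.cast_le.2 tab_le_floor).trans (Int.floor_le a)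
  refine ⟨hT.lt_of_ne (hgen _ (by linarith [tab_nonneg (m := m) ha.le]) tab_le).symm,
    fun h => ?_⟩
  rw [tab_eq_floor h]
  exact Int.lt_floor_add_one a

lemma lt_of_mem_cell_of_lt (hd : d ∈ cell m a) {t : ℤ} (ht : t ≤ m) (hta : (t : ℝ) < a) :
    (t : ℝ) < d :=
  lt_of_le_of_lt (Int.cast_le.2 (le_min (Int.le_floor.2 hta.le) ht)) hd.1

lemma lt_of_mem_cell_of_gt (hd : d ∈ cell m a) {t : ℤ} (ht : t ≤ m) (hat : a < t) :
    d < t := by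
  have hlt : tab m a < t := tab_le_floor.trans_lt (Int.floor_lt.2 hat)
  calc d < tab m a + 1 := hd.2 (hlt.trans_le ht)
    _ ≤ t := by exact_mod_cast hlt

lemma mem_cell_of_closure (hm : 1 ≤ m) (ha : 0 < a)
    (hagen : ∀ t : ℤ, -(m : ℤ) < t → t ≤ m → a ≠ t)
    (hcl : ∀ t : ℤ, -(m : ℤ) < t → t ≤ m → ((t : ℝ) < a → (t : ℝ) ≤ d) ∧ (a < t → d ≤ t))
    (hdgen : ∀ t : ℤ, -(m : ℤ) < t → t ≤ m → d ≠ t) : d ∈ cell m a := by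
  obtain ⟨hlo, hhi⟩ := mem_cell_self hm ha hagen
  have h0 := tab_nonneg (m := m) ha.le
  refine ⟨((hcl _ (by omega) tab_le).1 hlo).lt_of_ne (hdgen _ (by omega) tab_le).symm,
    fun h => ?_⟩
  have hup := (hcl (tab m a + 1) (by omega) h).2 (by exact_mod_cast hhi h)
  push_cast at hup
  exact hup.lt_of_ne (by exact_mod_cast hdgen (tab m a + 1) (by omega) h)

lemma exists_mem_cell_gt {c : ℝ} (hc : tab m b < m → c < tab m b + 1) :
    ∃ d ∈ cell m b, c < d := by
  by_cases h : tab m b < m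
  · obtain ⟨d, hd₁, hd₂⟩ := exists_between (max_lt (hc h) (lt_add_one (tab m b : ℝ)))
    exact ⟨d, ⟨(le_max_right _ _).trans_lt hd₁, fun _ => hd₂⟩, (le_max_left _ _).trans_lt hd₁⟩
  · refine ⟨max c m + 1, ⟨?_, fun h' => absurd h' h⟩, by linarith [le_max_left c m]⟩
    have : (tab m b : ℝ) ≤ m := by exact_mod_cast tab_le
    linarith [le_max_right c m]

lemma exists_add_mem_cell_of_le (ha : (m : ℝ) ≤ a) (hb : 0 ≤ b) (hd : (m : ℝ) ≤ d) :
    ∃ d' ∈ cell m b, d + d' ∈ cell m (a + b) := by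
  obtain ⟨d', hd', hpos⟩ := exists_mem_cell_gt (b := b) (c := 0) fun _ => by
    have : (0 : ℝ) ≤ tab m b := by exact_mod_cast tab_nonneg hb
    linarith
  exact ⟨d', hd', (mem_cell_of_le (by linarith)).2 (by linarith)⟩

lemma exists_add_mem_cell (ha : 0 ≤ a) (hb : 0 ≤ b) (hd : d ∈ cell m a) :
    ∃ d' ∈ cell m b, d + d' ∈ cell m (a + b) := by
  rcases le_or_gt (m : ℝ) a with hA | hA
  · exact exists_add_mem_cell_of_le hA hb ((mem_cell_of_le hA).1 hd).le
  rw [mem_cell_of_lt hA] at hd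
  have h₁ : (⌊a⌋ : ℝ) + ⌊b⌋ ≤ ⌊a + b⌋ := by exact_mod_cast Int.le_floor_add a b
  have h₂ : (⌊a + b⌋ : ℝ) ≤ ⌊a⌋ + ⌊b⌋ + 1 := by
    have := Int.le_floor_add_floor a b
    exact_mod_cast (by omega : ⌊a + b⌋ ≤ ⌊a⌋ + ⌊b⌋ + 1)
  rcases le_or_gt (m : ℝ) (a + b) with hAB | hAB
  · have hm : (m : ℝ) ≤ ⌊a + b⌋ := by exact_mod_cast Int.le_floor.2 (by exact_mod_cast hAB)
    obtain ⟨d', hd', hgt⟩ := exists_mem_cell_gt (b := b) (c := m - d) fun hB => by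
      rw [tab_eq_floor hB]
      linarith
    exact ⟨d', hd', (mem_cell_of_le hAB).2 (by linarith)⟩
  · have hlt : max (⌊b⌋ : ℝ) (⌊a + b⌋ - d) < min ((⌊b⌋ : ℝ) + 1) (⌊a + b⌋ + 1 - d) := by
      simp only [lt_min_iff, max_lt_iff]
      refine ⟨⟨?_, ?_⟩, ?_, ?_⟩ <;> linarith
    obtain ⟨d', hd'₁, hd'₂⟩ := exists_between hlt
    simp only [max_lt_iff, lt_min_iff] at hd'₁ hd'₂
    exact ⟨d', (mem_cell_of_lt (by linarith)).2 ⟨hd'₁.1, hd'₂.1⟩,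
      (mem_cell_of_lt hAB).2 ⟨by linarith, by linarith⟩⟩

lemma tab_add_tab_of_mem_cell (ha : 0 ≤ a) (hb : 0 ≤ b) (hd : d ∈ cell m a)
    (hd' : d' ∈ cell m b) (h : d + d' = m) : tab m a + tab m b = m - 1 := by
  have ha₀ : (0 : ℝ) ≤ tab m a := by exact_mod_cast tab_nonneg ha
  have hb₀ : (0 : ℝ) ≤ tab m b := by exact_mod_cast tab_nonneg hb
  have hA : tab m a < m :=
    tab_lt_iff.2 <| not_le.1 fun hA => by linarith [(mem_cell_of_le hA).1 hd, hd'.1]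
  have hB : tab m b < m :=
    tab_lt_iff.2 <| not_le.1 fun hB => by linarith [(mem_cell_of_le hB).1 hd', hd.1]
  have h₁ : ((tab m a + tab m b : ℤ) : ℝ) < m := by push_cast; linarith [hd.1, hd'.1]
  have h₂ : (m : ℝ) < ((tab m a + tab m b + 2 : ℤ) : ℝ) := by
    push_cast; linarith [hd.2 hA, hd'.2 hB]
  have h₁' : tab m a + tab m b < m := by exact_mod_cast h₁
  have h₂' : (m : ℤ) < tab m a + tab m b + 2 := by exact_mod_cast h₂
  omega

lemma sub_mem_cell_of_tab_add_tab (ha : 0 ≤ a) (hb : 0 ≤ b)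
    (h : tab m a + tab m b = m - 1) (hd : d ∈ cell m a) : m - d ∈ cell m b := by
  have hA : tab m a < m := by linarith [tab_nonneg (m := m) hb]
  have hB : tab m b < m := by linarith [tab_nonneg (m := m) ha]
  have hR : (tab m a : ℝ) + tab m b = m - 1 := by exact_mod_cast h
  exact ⟨by linarith [hd.2 hA], fun _ => by linarith [hd.1]⟩

end Cell

lemma nonempty_biInter_of_pairwise {ι : Type*} [LinearOrder ι] {F : ι → Set ℝ}
    {s : Finset ι} (hF : ∀ i ∈ s, (F i).OrdConnected) (h₁ : ∀ i ∈ s, (F i).Nonempty)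
    (h₂ : ∀ i ∈ s, ∀ j ∈ s, i < j → (F i ∩ F j).Nonempty) :
    (⋂ i ∈ s, F i).Nonempty := by
  refine Convex.helly_theorem' (𝕜 := ℝ) (fun i hi => (hF i hi).convex) fun I hI hcard => ?_
  rw [Module.finrank_self] at hcard
  interval_cases hc : #I
  · simp [Finset.card_eq_zero.1 hc]
  · obtain ⟨i, rfl⟩ := Finset.card_eq_one.1 hc
    simpa using h₁ i (hI (mem_singleton_self i))
  · obtain ⟨i, j, hij, rfl⟩ := Finset.card_eq_two.1 hc
    have hi := hI (mem_insert_self i {j})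
    have hj := hI (mem_insert_of_mem (mem_singleton_self j))
    simp only [mem_insert, mem_singleton, Set.iInter_iInter_eq_or_left, Set.iInter_iInter_eq_left]
    rcases hij.lt_or_gt with h | h
    · exact h₂ i hi j hj h
    · exact Set.inter_comm (F j) (F i) ▸ h₂ j hj i hi h

/-- The conditions of `RegionPoint` in coordinates: the pair `k < l` is the root `α_{k,l-1}`. -/
def Generic (n m : ℕ) (x : ℕ → ℝ) : Prop :=
  ∀ k l, k < l → l < n → 0 < x k - x l ∧ x k - x l ∈ cell m (x k - x l)

lemma RegionPoint.generic {n m : ℕ} {x : ℕ → ℝ} (hm : 1 ≤ m) (hx : RegionPoint n m x) :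
    Generic n m x := by
  intro k l hkl hl
  have hinn : inn x k (l - 1) = x k - x l := by rw [inn, Nat.sub_add_cancel (by omega)]
  rw [← hinn]
  have hpos := hx.2.1 k (l - 1) (by omega) (by omega)
  exact ⟨hpos, mem_cell_self hm hpos (hx.2.2 k (l - 1) (by omega) (by omega))⟩

/-- Where `z k - z l` has to lie for a point `z` of the facet on `z u - z w = m`. -/
def target (m : ℕ) (x : ℕ → ℝ) (u w k l : ℕ) : Set ℝ :=
  if k = u ∧ l = w then {(m : ℝ)} else cell m (x k - x l)

def Realizes (m : ℕ) (x : ℕ → ℝ) (u w a b : ℕ) (z : ℕ → ℝ) : Prop :=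
  ∀ k l, a ≤ k → k < l → l ≤ b → z k - z l ∈ target m x u w k l

section Realizes

variable {n m : ℕ} {x z : ℕ → ℝ} {u w a b : ℕ}

lemma exists_add_mem_cell_of_mem_target (hx : Generic n m x) (hlong : (m : ℝ) ≤ x u - x w)
    {k l : ℕ} (hkl : k < l) (hl : l < n) {c d : ℝ} (hc : 0 ≤ c)
    (hd : d ∈ target m x u w k l) : ∃ d' ∈ cell m c, d + d' ∈ cell m (x k - x l + c) := by
  unfold target at hd
  split_ifs at hd with hex
  · obtain ⟨rfl, rfl⟩ := hex
    exact exists_add_mem_cell_of_le hlong hc (Set.mem_singleton_iff.1 hd).ge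
  · exact exists_add_mem_cell (hx k l hkl hl).1.le hc hd

lemma realizes_base (hx : Generic n m x) (huw : u < w) (hw : w < n)
    (hcrit : ∀ k, u < k → k < w → tab m (x u - x k) + tab m (x k - x w) = m - 1) :
    Realizes m x u w u w (Function.update x w (x u - m)) := by
  intro k l hk hkl hl
  rw [Function.update_of_ne (by omega : k ≠ w)]
  rcases hl.lt_or_eq with hl | rfl
  · rw [Function.update_of_ne hl.ne, target, if_neg (fun h => hl.ne h.2)]
    exact (hx k l hkl (by omega)).2
  · rw [Function.update_self]
    rcases hk.eq_or_lt with rfl | hk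
    · rw [target, if_pos ⟨rfl, rfl⟩, sub_sub_cancel]
      exact Set.mem_singleton _
    · rw [target, if_neg (fun h => hk.ne' h.1)]
      convert sub_mem_cell_of_tab_add_tab (hx u k hk (by omega)).1.le (hx k l hkl hw).1.le
        (hcrit k hk hkl) (hx u k hk (by omega)).2 using 1
      ring

lemma Realizes.extend_right (hx : Generic n m x) (hlong : (m : ℝ) ≤ x u - x w)
    (hz : Realizes m x u w a b z) (hwb : w ≤ b) (hb : b + 1 < n) :
    ∃ z', Realizes m x u w a (b + 1) z' := by
  let F : ℕ → Set ℝ := fun k => {y | z k - y ∈ cell m (x k - x (b + 1))}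
  obtain ⟨y, hy⟩ : (⋂ k ∈ Icc a b, F k).Nonempty := by
    refine nonempty_biInter_of_pairwise
      (fun k _ => cell_ordConnected.preimage_anti fun _ _ h => sub_le_sub_left h _)
      (fun k hk => ⟨z k - (x k - x (b + 1)), ?_⟩) fun k hk k' hk' hkk' => ?_
    · simpa [F] using (hx k (b + 1) (by simp at hk; omega) hb).2
    simp only [mem_Icc] at hk hk'
    obtain ⟨d', hd', hsum⟩ := exists_add_mem_cell_of_mem_target hx hlong hkk' (by omega)
      (hx k' (b + 1) (by omega) hb).1.le (hz k k' hk.1 hkk' hk'.2)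
    refine ⟨z k' - d', ?_, by simpa [F] using hd'⟩
    show z k - (z k' - d') ∈ cell m (x k - x (b + 1))
    convert hsum using 2 <;> ring
  refine ⟨Function.update z (b + 1) y, fun k l hk hkl hl => ?_⟩
  rw [Function.update_of_ne (by omega : k ≠ b + 1)]
  rcases hl.lt_or_eq with hl | rfl
  · rw [Function.update_of_ne hl.ne]
    exact hz k l hk hkl (by omega)
  · rw [Function.update_self, target, if_neg (by omega)]
    exact Set.mem_iInter₂.1 hy k (mem_Icc.2 ⟨hk, by omega⟩)

lemma Realizes.extend_left (hx : Generic n m x) (hlong : (m : ℝ) ≤ x u - x w)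
    (hz : Realizes m x u w (a + 1) b z) (hau : a < u) (hb : b < n) :
    ∃ z', Realizes m x u w a b z' := by
  let F : ℕ → Set ℝ := fun l => {y | y - z l ∈ cell m (x a - x l)}
  obtain ⟨y, hy⟩ : (⋂ l ∈ Icc (a + 1) b, F l).Nonempty := by
    refine nonempty_biInter_of_pairwise
      (fun l _ => cell_ordConnected.preimage_mono fun _ _ h => sub_le_sub_right h _)
      (fun l hl => ⟨z l + (x a - x l), ?_⟩) fun l hl l' hl' hll' => ?_
    · simpa [F] using (hx a l (by simp at hl; omega) (by simp at hl; omega)).2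
    simp only [mem_Icc] at hl hl'
    obtain ⟨d', hd', hsum⟩ := exists_add_mem_cell_of_mem_target hx hlong hll' (by omega)
      (hx a l (by omega) (by omega)).1.le (hz l l' hl.1 hll' hl'.2)
    refine ⟨z l + d', by simpa [F] using hd', ?_⟩
    show z l + d' - z l' ∈ cell m (x a - x l')
    convert hsum using 2 <;> ring
  refine ⟨Function.update z a y, fun k l hk hkl hl => ?_⟩
  rw [Function.update_of_ne (by omega : l ≠ a)]
  rcases hk.eq_or_lt with rfl | hk
  · rw [Function.update_self, target, if_neg (by omega)]
    exact Set.mem_iInter₂.1 hy l (mem_Icc.2 ⟨by omega, hl⟩)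
  · rw [Function.update_of_ne hk.ne']
    exact hz k l hk hkl hl

lemma exists_realizes (hx : Generic n m x) (hlong : (m : ℝ) ≤ x u - x w) (huw : u < w)
    (hw : w < n)
    (hcrit : ∀ k, u < k → k < w → tab m (x u - x k) + tab m (x k - x w) = m - 1) :
    ∃ z, Realizes m x u w 0 (n - 1) z := by
  have right : ∀ b, w ≤ b → b < n → ∃ z, Realizes m x u w u b z := by
    intro b hwb
    induction b, hwb using Nat.le_induction with
    | base => exact fun _ => ⟨_, realizes_base hx huw hw hcrit⟩
    | succ b hwb ih =>
      intro hb
      obtain ⟨z, hz⟩ := ih (by omega)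
      exact hz.extend_right hx hlong hwb hb
  have left : ∀ s ≤ u, ∃ z, Realizes m x u w (u - s) (n - 1) z := by
    intro s
    induction s with
    | zero => exact fun _ => right (n - 1) (by omega) (by omega)
    | succ s ih =>
      intro hs
      obtain ⟨z, hz⟩ := ih (by omega)
      rw [show u - s = u - (s + 1) + 1 by omega] at hz
      exact hz.extend_left hx hlong (by omega) (by omega)
  simpa using left u le_rfl

end Realizes

section Wall

variable {n m : ℕ} {x : ℕ → ℝ} {u v : ℕ}

lemma crit_of_sepWall (hm : 1 ≤ m) (hx : RegionPoint n m x) {e : ℕ → ℕ → ℤ}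
    (he : TabOf n m x e) (huv : u ≤ v) (hv : v + 2 ≤ n) (h : SepWall n m x u v) :
    SepCrit m e u v := by
  obtain ⟨hlong, p, ⟨-, hcl⟩, hpm, hgen⟩ := h
  have hcell : ∀ i j, i ≤ j → j + 2 ≤ n → ¬(i = u ∧ j = v) → inn p i j ∈ cell m (inn x i j) :=
    fun i j hij hj hne => mem_cell_of_closure hm (hx.2.1 i j hij hj) (hx.2.2 i j hij hj)
      (hcl i j hij hj) fun t ht₁ ht₂ => hgen i j hij hj t ht₁ ht₂ fun h => hne ⟨h.1, h.2.1⟩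
  refine ⟨(he u v huv hv).trans (tab_eq_iff.2 hlong.le), fun t hut htv => ?_⟩
  rw [he u t hut (by omega), he (t + 1) v (by omega) hv]
  refine tab_add_tab_of_mem_cell (hx.2.1 u t hut (by omega)).le
    (hx.2.1 (t + 1) v (by omega) hv).le (hcell u t hut (by omega) (by omega))
    (hcell (t + 1) v (by omega) hv (by omega)) ?_
  rw [← hpm]
  simp only [inn]
  ring

lemma sepWall_of_realizes (hx : RegionPoint n m x) (hlong : (m : ℝ) < inn x u v)
    (huv : u ≤ v) (hv : v + 2 ≤ n) {z : ℕ → ℝ} (hz : Realizes m x u (v + 1) 0 (n - 1) z) :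
    SepWall n m x u v := by
  set p : ℕ → ℝ := fun i => z i - (∑ j ∈ range n, z j) / n
  have hp : ∀ i j, i ≤ j → j + 2 ≤ n → inn p i j ∈ target m x u (v + 1) i (j + 1) := by
    intro i j hij hj
    convert hz i (j + 1) (Nat.zero_le i) (by omega) (by omega) using 1
    simp only [p, inn]
    ring
  have hmR : ∀ t : ℤ, t ≤ m → (t : ℝ) ≤ m := fun t ht => by exact_mod_cast ht
  refine ⟨hlong, p, ⟨?_, fun i j hij hj t ht₁ ht₂ => ?_⟩, ?_, fun i j hij hj t ht₁ ht₂ hne => ?_⟩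
  · rw [SumZero, sum_sub_distrib, sum_const, card_range, nsmul_eq_mul,
      mul_div_cancel₀ _ (by norm_cast; omega), sub_self]
  · have hpij := hp i j hij hj
    rw [target] at hpij
    split_ifs at hpij with hex
    · obtain ⟨rfl, hj'⟩ := hex
      obtain rfl : j = v := by omega
      rw [Set.mem_singleton_iff.1 hpij]
      exact ⟨fun _ => hmR t ht₂, fun h => absurd (h.trans_le (hmR t ht₂)) hlong.not_gt⟩
    · exact ⟨fun h => (lt_of_mem_cell_of_lt hpij ht₂ h).le,
        fun h => (lt_of_mem_cell_of_gt hpij ht₂ h).le⟩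
  · have hpuv := hp u v huv hv
    rwa [target, if_pos ⟨rfl, rfl⟩] at hpuv
  · have hpij := hp i j hij hj
    rw [target] at hpij
    split_ifs at hpij with hex
    · rw [Set.mem_singleton_iff.1 hpij]
      exact fun h => hne ⟨hex.1, by omega, by exact_mod_cast h.symm⟩
    · rcases (hx.2.2 i j hij hj t ht₁ ht₂).lt_or_gt with h | h
      · exact (lt_of_mem_cell_of_gt hpij ht₂ h).ne
      · exact (lt_of_mem_cell_of_lt hpij ht₂ h).ne'

end Wall

theorem sepwall_iff_crit_general (n m : ℕ) (hm : 1 ≤ m) (x : ℕ → ℝ)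
    (e : ℕ → ℕ → ℤ) (hx : RegionPoint n m x) (he : TabOf n m x e)
    (u v : ℕ) (huv : u ≤ v) (hv : v + 2 ≤ n) :
    SepWall n m x u v ↔ SepCrit m e u v := by
  refine ⟨crit_of_sepWall hm hx he huv hv, fun ⟨hem, hcrit⟩ => ?_⟩
  have hlong : (m : ℝ) < inn x u v :=
    (tab_eq_iff.1 ((he u v huv hv).symm.trans hem)).lt_of_ne
      (by exact_mod_cast (hx.2.2 u v huv hv m (by omega) le_rfl).symm)
  have hcrit' : ∀ k, u < k → k < v + 1 →
      tab m (x u - x k) + tab m (x k - x (v + 1)) = m - 1 := by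
    intro k huk hkv
    have h := hcrit (k - 1) (by omega) (by omega)
    rw [he u (k - 1) (by omega) (by omega), he (k - 1 + 1) v (by omega) hv,
      Nat.sub_add_cancel (by omega : 1 ≤ k)] at h
    rwa [inn, Nat.sub_add_cancel (by omega : 1 ≤ k)] at h
  obtain ⟨z, hz⟩ := exists_realizes (hx.generic hm) hlong.le (by omega) (by omega) hcrit'
  exact sepWall_of_realizes hx hlong huv hv hz

/-- `H_{α_{uv}, m}` is a separating wall of a dominant `m`-Shi region iff its
Shi tableau satisfies `e_{uv} = m` and `e_{ut} + e_{t+1,v} = m - 1` for all `u ≤ t < v`. -/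
theorem sepwall_iff_crit (n m : ℕ) (hn : 2 ≤ n) (hm : 1 ≤ m) (x : ℕ → ℝ)
    (e : ℕ → ℕ → ℤ) (hx : RegionPoint n m x) (he : TabOf n m x e)
    (u v : ℕ) (huv : u ≤ v) (hv : v + 2 ≤ n) :
    SepWall n m x u v ↔ SepCrit m e u v :=
  sepwall_iff_crit_general n m hm x e hx he u v huv hv

end Shi
end

section
/- Let R be a dominant region of the m-Shi arrangement of type A_{n−1} with m-minimal alcove A, and let λ be the n-core with Ψ(λ) = A, where Ψ is the abacus-to-Shi-coordinate bijection. Then H_{θ,m} is a separating wall for R if and only if h_{11}^λ = n(m−1) + 1. -/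
open Finset

namespace Shi

/-- Number of boxes in column `j` (0-indexed) of the partition `lam` with `ℓ` positive parts:
the conjugate partition. -/
def conjP (lam : ℕ → ℕ) (ℓ j : ℕ) : ℕ := ((Finset.range ℓ).filter (fun i => j < lam i)).card

/-- Hook length of the (0-indexed) box `(i, j)` of the partition `lam` having `ℓ` positive
parts. -/
def hookP (lam : ℕ → ℕ) (ℓ i j : ℕ) : ℤ :=
  (lam i : ℤ) - j + conjP lam ℓ j - i - 1

/-- `lam : ℕ → ℕ` (0-indexed, weakly decreasing, exactly `ℓ` positive parts) is an `n`-core: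
no hook length is divisible by `n`. -/
def IsCore (n : ℕ) (lam : ℕ → ℕ) (ℓ : ℕ) : Prop :=
  Antitone lam ∧ (∀ i, 0 < lam i ↔ i < ℓ) ∧
    ∀ i j, i < ℓ → j < lam i → ¬ ((n : ℤ) ∣ hookP lam ℓ i j)

/-- The `k`-th β-number (first column hook length) of `lam`, 0-indexed. -/
def betaP (lam : ℕ → ℕ) (ℓ k : ℕ) : ℤ := (lam k : ℤ) + ℓ - k - 1

/-- `x` is a bead of the original abacus of `lam`: a negative integer or a β-number. -/
def IsBead (lam : ℕ → ℕ) (ℓ : ℕ) (x : ℤ) : Prop := x < 0 ∨ ∃ k < ℓ, betaP lam ℓ k = x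

/-- Level numbers of the original abacus of the `n`-core `lam`: `bvec n lam ℓ i` is the
number of β-numbers congruent to `i` mod `n`, i.e. the level of the first gap on runner
`i`. -/
def bvec (n : ℕ) (lam : ℕ → ℕ) (ℓ i : ℕ) : ℕ :=
  ((Finset.range ℓ).filter (fun k => betaP lam ℓ k % (n : ℤ) = (i : ℤ))).card

/-- The increasing rearrangement `p_1 < ⋯ < p_n` (here 0-indexed) of the numbers
`b_{i-1}·n + i - 1`. -/
def psort (n : ℕ) (lam : ℕ → ℕ) (ℓ : ℕ) : List ℕ :=
  ((Finset.range n).image (fun i => bvec n lam ℓ i * n + i)).sort (· ≤ ·)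

/-- Shi coordinates of the alcove `Ψ(lam)`: `k_{ij} = ⌊(p_{j+1} - p_i)/n⌋`, 0-indexed. -/
def kOf (n : ℕ) (lam : ℕ → ℕ) (ℓ : ℕ) (i j : ℕ) : ℤ :=
  (((psort n lam ℓ).getD (j + 1) 0 : ℤ) - ((psort n lam ℓ).getD i 0 : ℤ)) / (n : ℤ)

/-- Shi's condition for a family of integers to be the coordinates of an alcove. -/
def IsAlcoveCoords (n : ℕ) (k : ℕ → ℕ → ℤ) : Prop :=
  ∀ i t j, i ≤ t → t < j → j + 2 ≤ n →
    k i t + k (t + 1) j ≤ k i j ∧ k i j ≤ k i t + k (t + 1) j + 1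

/-- Coordinates of a dominant alcove. -/
def DomAlcoveCoords (n : ℕ) (k : ℕ → ℕ → ℤ) : Prop :=
  (∀ i j, i ≤ j → j + 2 ≤ n → 0 ≤ k i j) ∧ IsAlcoveCoords n k

/-- `k` is the family of Shi coordinates of the `m`-minimal alcove of the dominant `m`-Shi
region with Shi tableau `e`: it is a dominant alcove of the region, coordinatewise minimal
among alcoves of the region. -/
def MinAlcRel (n m : ℕ) (e k : ℕ → ℕ → ℤ) : Prop :=
  DomAlcoveCoords n k ∧ (∀ i j, i ≤ j → j + 2 ≤ n → min (k i j) (m : ℤ) = e i j) ∧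
  ∀ k', DomAlcoveCoords n k' →
    (∀ i j, i ≤ j → j + 2 ≤ n → min (k' i j) (m : ℤ) = e i j) →
    ∀ i j, i ≤ j → j + 2 ≤ n → k i j ≤ k' i j

/-!
Region side: a point of the closure of `R` lying on `H_{θ,m}` and on no other hyperplane exists
iff for every splitting `θ = α_{0t} + α_{t+1,n-2}` the two Shi tableau entries add up to `m - 1`.
Such a point keeps its pairings with `α_{0t}` and `α_{t+1,n-2}` in the strips of `R` while they
add up to `m`; conversely it is obtained from a point of `R` by moving only its first and last
coordinates. Minimality of the alcove upgrades `e_θ = m` to `k_θ = m`.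

Alcove side: `p_0 = 0` and the `p_i` have distinct residues mod `n`, so
`k_{0t} + k_{t+1,n-2} = ⌊p_{t+1}/n⌋ + ⌊(p_{n-1} - p_{t+1})/n⌋` is `⌊p_{n-1}/n⌋ - 1` exactly when
`p_{t+1}` has a larger residue than `p_{n-1}`; the criterion thus says `p_{n-1} = nm + 1`.
Finally the abacus of an `n`-core is flush (a bead `v ≥ n` above a gap `v - n` would give a hook
of length `n`), so the largest `p_i` is `β_0 + n = h_{11} + n`.
-/

def InShiStrip (m : ℕ) (E : ℤ) (a : ℝ) : Prop :=
  (0 ≤ E ∧ E < m ∧ (E : ℝ) < a ∧ a < E + 1) ∨ (E = m ∧ (m : ℝ) < a)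

namespace InShiStrip

variable {m : ℕ} {E F : ℤ} {a b : ℝ}

lemma nonneg (ha : InShiStrip m E a) : 0 ≤ E := by
  rcases ha with ⟨h, -⟩ | ⟨rfl, -⟩ <;> omega

lemma lt (ha : InShiStrip m E a) : (E : ℝ) < a := by
  rcases ha with ⟨-, -, h, -⟩ | ⟨rfl, h⟩ <;> exact h

lemma of_closure (hm : 1 ≤ m) (ha : InShiStrip m E a)
    (hcl : ∀ t : ℤ, -(m : ℤ) < t → t ≤ m → ((t : ℝ) < a → (t : ℝ) ≤ b) ∧ (a < t → b ≤ t))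
    (hb : ∀ t : ℤ, -(m : ℤ) < t → t ≤ m → b ≠ t) : InShiStrip m E b := by
  rcases ha with ⟨hE0, hEm, hEa, haE⟩ | ⟨rfl, hma⟩
  · have hup := (hcl (E + 1) (by omega) (by omega)).2 (by push_cast; exact haE)
    have hne := hb (E + 1) (by omega) (by omega)
    push_cast at hup hne
    exact Or.inl ⟨hE0, hEm, ((hcl E (by omega) hEm.le).1 hEa).lt_of_ne
      (hb E (by omega) hEm.le).symm, hup.lt_of_ne hne⟩
  · have hlow := (hcl m (by omega) le_rfl).1 (by exact_mod_cast hma)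
    have hne := hb m (by omega) le_rfl
    push_cast at hlow hne
    exact Or.inr ⟨rfl, hlow.lt_of_ne hne.symm⟩

lemma same_side (ha : InShiStrip m E a) (hb : InShiStrip m E b) {t : ℤ} (ht : t ≤ m) :
    (((t : ℝ) < a → (t : ℝ) ≤ b) ∧ (a < t → b ≤ t)) ∧ b ≠ t := by
  have hEa := ha.lt
  have hEb := hb.lt
  rcases le_or_gt t E with htE | hEt
  · have htE' : (t : ℝ) ≤ E := by exact_mod_cast htE
    refine ⟨⟨fun _ => by linarith, fun h => by linarith⟩, by intro h; linarith⟩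
  · have htE' : (E : ℝ) + 1 ≤ t := by exact_mod_cast hEt
    rcases ha with ⟨-, -, -, haE⟩ | ⟨rfl, -⟩
    · rcases hb with ⟨-, -, -, hbE⟩ | ⟨rfl, -⟩
      · refine ⟨⟨fun h => by linarith, fun _ => by linarith⟩, by intro h; linarith⟩
      · omega
    · omega

lemma lt_add_one_of_add_eq (ha : InShiStrip m E a) (hb : InShiStrip m F b) (h : E + F = m - 1) :
    E < m ∧ a < E + 1 := by
  rcases ha with ⟨-, hEm, -, haE⟩ | ⟨rfl, -⟩
  · exact ⟨hEm, haE⟩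
  · have := hb.nonneg; omega

lemma add_eq (ha : InShiStrip m E a) (hb : InShiStrip m F b) (h : a + b = m) : E + F = m - 1 := by
  have hEa := ha.lt
  have hFb := hb.lt
  have hF0 : (0 : ℝ) ≤ F := by exact_mod_cast hb.nonneg
  have hE0 : (0 : ℝ) ≤ E := by exact_mod_cast ha.nonneg
  rcases ha with ⟨-, -, -, haE⟩ | ⟨rfl, hma⟩
  · rcases hb with ⟨-, -, -, hbF⟩ | ⟨rfl, hmb⟩
    · have hlow : ((E + F : ℤ) : ℝ) < m := by push_cast; linarith
      have hhigh : (m : ℝ) < ((E + F + 2 : ℤ) : ℝ) := by push_cast; linarith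
      have hlow' : E + F < m := by exact_mod_cast hlow
      have hhigh' : (m : ℤ) < E + F + 2 := by exact_mod_cast hhigh
      omega
    · linarith
  · linarith

lemma sub_of_lt {s : ℝ} (ha : InShiStrip m E a) (hs : 0 ≤ s) (hEa : (E : ℝ) < a - s) :
    InShiStrip m E (a - s) := by
  rcases ha with ⟨hE0, hEm, -, haE⟩ | ⟨rfl, -⟩
  · exact Or.inl ⟨hE0, hEm, hEa, by linarith⟩
  · exact Or.inr ⟨rfl, hEa⟩

end InShiStrip

lemma inShiStrip_of_tabOf {n m : ℕ} {x : ℕ → ℝ} {e : ℕ → ℕ → ℤ} (hx : RegionPoint n m x)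
    (he : TabOf n m x e) {i j : ℕ} (hij : i ≤ j) (hjn : j + 2 ≤ n) :
    InShiStrip m (e i j) (inn x i j) := by
  have hpos := hx.2.1 i j hij hjn
  have havoid := hx.2.2 i j hij hjn
  rw [he i j hij hjn]
  have hfl : 0 ≤ ⌊inn x i j⌋ := Int.floor_nonneg.mpr hpos.le
  rcases le_or_gt (m : ℤ) ⌊inn x i j⌋ with hc | hc
  · have hle : (m : ℝ) ≤ inn x i j := by exact_mod_cast Int.le_floor.mp hc
    refine Or.inr ⟨min_eq_right hc, hle.lt_of_ne fun h => ?_⟩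
    rcases Nat.eq_zero_or_pos m with h0 | h0
    · rw [h0, Nat.cast_zero] at h
      exact hpos.ne h
    · exact havoid m (by omega) le_rfl (by exact_mod_cast h.symm)
  · rw [min_eq_left hc.le]
    exact Or.inl ⟨hfl, hc, (Int.floor_le _).lt_of_ne fun h => havoid _ (by omega) hc.le h.symm,
      Int.lt_floor_add_one _⟩

lemma inn_add_inn (x : ℕ → ℝ) (i t j : ℕ) : inn x i t + inn x (t + 1) j = inn x i j := by
  unfold inn; ring

lemma sepCrit_of_sepWall {n m : ℕ} (hn : 2 ≤ n) (hm : 1 ≤ m) {x : ℕ → ℝ} {e : ℕ → ℕ → ℤ}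
    (hx : RegionPoint n m x) (he : TabOf n m x e) (h : SepWall n m x 0 (n - 2)) :
    SepCrit m e 0 (n - 2) := by
  obtain ⟨hxθ, p, ⟨-, hcl⟩, hpθ, hpav⟩ := h
  have hstrip : ∀ i j, i ≤ j → j + 2 ≤ n → ¬(i = 0 ∧ j = n - 2) →
      InShiStrip m (e i j) (inn p i j) := fun i j hij hjn hne =>
    (inShiStrip_of_tabOf hx he hij hjn).of_closure hm (hcl i j hij hjn)
      fun t h1 h2 => hpav i j hij hjn t h1 h2 (by tauto)
  refine ⟨?_, fun t _ ht => ?_⟩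
  · rcases inShiStrip_of_tabOf hx he (Nat.zero_le _) (by omega : n - 2 + 2 ≤ n)
      with ⟨-, hEm, -, hxE⟩ | ⟨hEm, -⟩
    · have : (e 0 (n - 2) : ℝ) + 1 ≤ m := by exact_mod_cast hEm
      linarith
    · exact hEm
  · exact (hstrip 0 t (Nat.zero_le _) (by omega) (by omega)).add_eq
      (hstrip (t + 1) (n - 2) (by omega) (by omega) (by omega)) (by rw [inn_add_inn, hpθ])

def moveEnds (n : ℕ) (s : ℝ) (x : ℕ → ℝ) (k : ℕ) : ℝ :=
  x k - (if k = 0 then s else 0) + (if k = n - 1 then s else 0)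

lemma inn_moveEnds {n : ℕ} (s : ℝ) (x : ℕ → ℝ) {i j : ℕ} (hij : i ≤ j) (hjn : j + 2 ≤ n) :
    inn (moveEnds n s x) i j =
      inn x i j - (if i = 0 then s else 0) - (if j = n - 2 then s else 0) := by
  have hj : (j + 1 = n - 1) ↔ (j = n - 2) := by omega
  simp only [inn, moveEnds, if_neg (show i ≠ n - 1 by omega), if_neg (Nat.succ_ne_zero j), hj]
  ring

lemma SumZero.moveEnds {n : ℕ} (hn : 0 < n) (s : ℝ) {x : ℕ → ℝ} (hx : SumZero n x) :
    SumZero n (moveEnds n s x) := by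
  simpa [SumZero, Shi.moveEnds, sum_add_distrib, sum_sub_distrib, hn] using hx

lemma sepWall_of_sepCrit {n m : ℕ} (hn : 2 ≤ n) {x : ℕ → ℝ} {e : ℕ → ℕ → ℤ}
    (hx : RegionPoint n m x) (he : TabOf n m x e) (h : SepCrit m e 0 (n - 2)) :
    SepWall n m x 0 (n - 2) := by
  obtain ⟨hθ, hsum⟩ := h
  have hxθ : (m : ℝ) < inn x 0 (n - 2) := by
    rcases inShiStrip_of_tabOf hx he (Nat.zero_le _) (by omega : n - 2 + 2 ≤ n)
      with ⟨-, hEm, -⟩ | ⟨-, h⟩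
    · omega
    · exact h
  -- Pushing `x` onto the wall by moving its two end coordinates only changes the pairings with
  -- the roots `α_{0t}` and `α_{t+1,n-2}`, and the criterion leaves each of them room `2s`.
  set s := (inn x 0 (n - 2) - m) / 2 with hs
  have hs0 : 0 < s := by linarith
  set p := moveEnds n s x
  have hpθ : inn p 0 (n - 2) = m := by
    rw [inn_moveEnds s x (Nat.zero_le _) (by omega), if_pos rfl, if_pos rfl, hs]; ring
  have hroom : ∀ t < n - 2, (e 0 t : ℝ) + 2 * s < inn x 0 t ∧
      (e (t + 1) (n - 2) : ℝ) + 2 * s < inn x (t + 1) (n - 2) := by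
    intro t ht
    have h1 := inShiStrip_of_tabOf hx he (Nat.zero_le t) (by omega)
    have h2 := inShiStrip_of_tabOf hx he (by omega : t + 1 ≤ n - 2) (by omega)
    have hsum' := hsum t (Nat.zero_le t) ht
    have hu1 := (h1.lt_add_one_of_add_eq h2 hsum').2
    have hu2 := (h2.lt_add_one_of_add_eq h1 (by omega)).2
    have hsplit := inn_add_inn x 0 t (n - 2)
    have hcast : (e 0 t : ℝ) + e (t + 1) (n - 2) = m - 1 := by exact_mod_cast hsum'
    constructor <;> linarith
  have hstrip : ∀ i j, i ≤ j → j + 2 ≤ n → ¬(i = 0 ∧ j = n - 2) →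
      InShiStrip m (e i j) (inn p i j) := by
    intro i j hij hjn hne
    have hx_strip := inShiStrip_of_tabOf hx he hij hjn
    rw [inn_moveEnds s x hij hjn]
    by_cases hi : i = 0
    · subst hi
      have hj : j < n - 2 := by omega
      rw [if_pos rfl, if_neg hj.ne, sub_zero]
      exact hx_strip.sub_of_lt hs0.le (by linarith [(hroom j hj).1])
    by_cases hj : j = n - 2
    · subst hj
      obtain ⟨t, rfl⟩ : ∃ t, i = t + 1 := ⟨i - 1, by omega⟩
      rw [if_neg hi, if_pos rfl, sub_zero]
      exact hx_strip.sub_of_lt hs0.le (by linarith [(hroom t (by omega)).2])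
    · rwa [if_neg hi, if_neg hj, sub_zero, sub_zero]
  have hside : ∀ i j, i ≤ j → j + 2 ≤ n → ∀ t : ℤ, t ≤ m →
      (((t : ℝ) < inn x i j → (t : ℝ) ≤ inn p i j) ∧ (inn x i j < t → inn p i j ≤ t)) ∧
        (¬(i = 0 ∧ j = n - 2 ∧ t = m) → inn p i j ≠ t) := by
    intro i j hij hjn t ht
    by_cases hθ' : i = 0 ∧ j = n - 2
    · obtain ⟨rfl, rfl⟩ := hθ'
      have htm : (t : ℝ) ≤ m := by exact_mod_cast ht
      rw [hpθ]
      exact ⟨⟨fun _ => htm, fun h => by linarith⟩,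
        fun hne h => hne ⟨rfl, rfl, by exact_mod_cast h.symm⟩⟩
    · obtain ⟨hcl, hne⟩ :=
        (inShiStrip_of_tabOf hx he hij hjn).same_side (hstrip i j hij hjn hθ') ht
      exact ⟨hcl, fun _ => hne⟩
  exact ⟨hxθ, p, ⟨hx.1.moveEnds (by omega) s, fun i j hij hjn t _ ht => (hside i j hij hjn t ht).1⟩,
    hpθ, fun i j hij hjn t _ ht hne => (hside i j hij hjn t ht).2 hne⟩

lemma sepWall_theta_iff_sepCrit {n m : ℕ} (hn : 2 ≤ n) (hm : 1 ≤ m) {x : ℕ → ℝ}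
    {e : ℕ → ℕ → ℤ} (hx : RegionPoint n m x) (he : TabOf n m x e) :
    SepWall n m x 0 (n - 2) ↔ SepCrit m e 0 (n - 2) :=
  ⟨sepCrit_of_sepWall hn hm hx he, sepWall_of_sepCrit hn hx he⟩

lemma MinAlcRel.sepCrit_theta_iff {n m : ℕ} (hn : 2 ≤ n) {e k : ℕ → ℕ → ℤ}
    (hmin : MinAlcRel n m e k) :
    SepCrit m e 0 (n - 2) ↔ k 0 (n - 2) = m ∧ ∀ t < n - 2, k 0 t + k (t + 1) (n - 2) = m - 1 := by
  obtain ⟨⟨hk0, hkalc⟩, hke, hkmin⟩ := hmin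
  have hsum_iff : ∀ t < n - 2, e 0 t + e (t + 1) (n - 2) = m - 1 ↔
      k 0 t + k (t + 1) (n - 2) = m - 1 := by
    intro t ht
    rw [← hke 0 t (Nat.zero_le t) (by omega), ← hke (t + 1) (n - 2) (by omega) (by omega)]
    have := hk0 0 t (Nat.zero_le t) (by omega)
    have := hk0 (t + 1) (n - 2) (by omega) (by omega)
    omega
  have hθ := hke 0 (n - 2) (Nat.zero_le _) (by omega)
  constructor
  · rintro ⟨he_θ, hsum⟩
    have hsum' : ∀ t < n - 2, k 0 t + k (t + 1) (n - 2) = m - 1 := fun t ht =>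
      (hsum_iff t ht).1 (hsum t (Nat.zero_le t) ht)
    refine ⟨le_antisymm ?_ (by omega), hsum'⟩
    -- lowering `k θ` to `m` gives another dominant alcove of the same region
    let k' : ℕ → ℕ → ℤ := fun i j => if i = 0 ∧ j = n - 2 then m else k i j
    have hk'_alc : DomAlcoveCoords n k' := by
      refine ⟨fun i j hij hjn => ?_, fun i t j hit htj hjn => ?_⟩
      · simp only [k']; split_ifs
        · positivity
        · exact hk0 i j hij hjn
      · have h1 : ¬(i = 0 ∧ t = n - 2) := by omega
        have h2 : ¬(t + 1 = 0 ∧ j = n - 2) := by omega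
        simp only [k', if_neg h1, if_neg h2]
        split_ifs with h
        · obtain ⟨rfl, rfl⟩ := h
          have := hsum' t htj
          omega
        · exact hkalc i t j hit htj hjn
    have hk'_reg : ∀ i j, i ≤ j → j + 2 ≤ n → min (k' i j) (m : ℤ) = e i j := by
      intro i j hij hjn
      simp only [k']
      split_ifs with h
      · obtain ⟨rfl, rfl⟩ := h
        rw [min_self, he_θ]
      · exact hke i j hij hjn
    simpa [k'] using hkmin k' hk'_alc hk'_reg 0 (n - 2) (Nat.zero_le _) (by omega)
  · rintro ⟨hkθ, hsum⟩
    refine ⟨by rw [← hθ, hkθ, min_self], fun t _ ht => (hsum_iff t ht).2 (hsum t ht)⟩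

lemma _root_.Int.ediv_add_sub_ediv {n : ℤ} (hn : 0 < n) (q P : ℤ) :
    q / n + (P - q) / n = P / n - if P % n < q % n then 1 else 0 := by
  have hq := Int.emod_add_mul_ediv q n
  have hP := Int.emod_add_mul_ediv P n
  have := Int.emod_nonneg q hn.ne'
  have := Int.emod_nonneg P hn.ne'
  have := Int.emod_lt_of_pos q hn
  have := Int.emod_lt_of_pos P hn
  split_ifs with h
  · have := ((Int.ediv_emod_unique (a := P - q) (r := P % n - q % n + n)
      (q := P / n - q / n - 1) hn).2 ⟨by linear_combination hP - hq, by omega, by omega⟩).1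
    omega
  · have := ((Int.ediv_emod_unique (a := P - q) (r := P % n - q % n) (q := P / n - q / n) hn).2
      ⟨by linear_combination hP - hq, by omega, by omega⟩).1
    omega

lemma theta_coords_iff {n : ℕ} (hn : 2 ≤ n) (m : ℤ) (p : ℕ → ℤ) (h0 : p 0 = 0)
    (hres : ∀ i < n, ∀ j < n, i ≠ j → p i % n ≠ p j % n) (hone : ∃ i < n, p i % n = 1) :
    (p (n - 1) / n = m ∧ ∀ t < n - 2, p (t + 1) / n + (p (n - 1) - p (t + 1)) / n = m - 1) ↔
      p (n - 1) = n * m + 1 := by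
  have hn0 : (0 : ℤ) < n := by exact_mod_cast (show 0 < n by omega)
  have hres0 : ∀ i < n, i ≠ 0 → p i % n ≠ 0 := fun i hi hi0 => by
    simpa [h0] using hres i hi 0 (by omega) hi0
  have := Int.emod_nonneg (p (n - 1)) hn0.ne'
  simp only [Int.ediv_add_sub_ediv hn0]
  constructor
  · rintro ⟨hm, hsum⟩
    suffices hP1 : p (n - 1) % n = 1 by
      rw [← Int.emod_add_mul_ediv (p (n - 1)) n, hm, hP1]; ring
    by_contra hne
    obtain ⟨i, hi, hi1⟩ := hone
    have hi0 : i ≠ 0 := by rintro rfl; simp [h0] at hi1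
    obtain ⟨t, rfl⟩ : ∃ t, i = t + 1 := ⟨i - 1, by omega⟩
    have hin : t + 1 ≠ n - 1 := fun h => hne (h ▸ hi1)
    have := hres0 (n - 1) (by omega) (by omega)
    have := hsum t (by omega)
    rw [hi1, if_neg (show ¬p (n - 1) % n < 1 by omega)] at this
    omega
  · intro hP
    obtain ⟨hm, hP1⟩ := (Int.ediv_emod_unique (a := p (n - 1)) (r := 1) (q := m) hn0).2
      ⟨by rw [hP]; ring, by omega, by omega⟩
    refine ⟨hm, fun t ht => ?_⟩
    have := hres0 (t + 1) (by omega) (by omega)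
    have := hres (t + 1) (by omega) (n - 1) (by omega) (by omega)
    have := Int.emod_nonneg (p (t + 1)) hn0.ne'
    rw [hm, hP1, if_pos (by omega)]

lemma _root_.Int.eq_mul_add_iff_toNat_ediv {v : ℤ} (hv : 0 ≤ v) {n r : ℕ} (hr : r < n) (s : ℕ) :
    v = s * n + r ↔ (v / n).toNat = s ∧ v % n = r := by
  have hn : (0 : ℤ) < n := by omega
  have := Int.ediv_nonneg hv hn.le
  rw [show (v / n).toNat = s ↔ v / n = s by omega, Int.ediv_emod_unique hn]
  constructor
  · rintro rfl
    exact ⟨by ring, by positivity, by exact_mod_cast hr⟩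
  · rintro ⟨h, -, -⟩
    rw [← h]; ring

lemma _root_.Finset.mem_iff_lt_card_of_isLowerSet {S : Finset ℕ} (hS : IsLowerSet (S : Set ℕ))
    (s : ℕ) : s ∈ S ↔ s < #S := by
  rcases hS.eq_univ_or_Iio with h | ⟨a, h⟩
  · exact absurd (h ▸ S.finite_toSet) Set.infinite_univ
  · have hS : S = range a := by ext; simp [← Finset.mem_coe, h]
    simp [hS]

section Abacus

variable {n : ℕ} {lam : ℕ → ℕ} {ℓ : ℕ}

lemma betaP_strictAnti (hA : Antitone lam) : StrictAnti (betaP lam ℓ) := by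
  intro a b hab
  have := hA hab.le
  simp only [betaP]
  omega

lemma betaP_pos (hpos : ∀ i, 0 < lam i ↔ i < ℓ) {k : ℕ} (hk : k < ℓ) : 0 < betaP lam ℓ k := by
  have := (hpos k).2 hk
  simp only [betaP]
  omega

lemma exists_hookP_eq_betaP_sub (hA : Antitone lam) (hpos : ∀ i, 0 < lam i ↔ i < ℓ) {k : ℕ}
    (hk : k < ℓ) {y : ℤ} (hy : 0 ≤ y) (hyk : y < betaP lam ℓ k) (hnb : ¬IsBead lam ℓ y) :
    ∃ j < lam k, hookP lam ℓ k j = betaP lam ℓ k - y := by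
  have hne : ∀ i < ℓ, betaP lam ℓ i ≠ y := fun i hi h => hnb (Or.inr ⟨i, hi, h⟩)
  -- `c` is the number of β-numbers above the gap `y`, and `y` sits in column `y - ℓ + c`
  obtain ⟨c, hc_spec, hc_lt⟩ : ∃ c, (ℓ ≤ c ∨ betaP lam ℓ c < y) ∧
      ∀ i < c, i < ℓ ∧ y < betaP lam ℓ i := by
    have hex : ∃ c, ℓ ≤ c ∨ betaP lam ℓ c < y := ⟨ℓ, Or.inl le_rfl⟩
    refine ⟨Nat.find hex, Nat.find_spec hex, fun i hi => ?_⟩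
    obtain ⟨h1, h2⟩ := not_or.1 (Nat.find_min hex hi)
    exact ⟨not_le.1 h1, (not_lt.1 h2).lt_of_ne (hne i (not_le.1 h1)).symm⟩
  have hkc : k < c := by
    by_contra h
    rcases hc_spec with h1 | h1
    · omega
    · have := (betaP_strictAnti (ℓ := ℓ) hA).antitone (not_lt.1 h)
      omega
  have hlam_c : (lam c : ℤ) ≤ y - ℓ + c := by
    rcases hc_spec with h1 | h1
    · have := (hpos c).not.2 (by omega)
      omega
    · simp only [betaP] at h1
      omega
  obtain ⟨j, hj⟩ : ∃ j : ℕ, (j : ℤ) = y - ℓ + c := ⟨(y - ℓ + c).toNat, by omega⟩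
  have hj_lt : ∀ i < c, j < lam i := fun i hi => by
    have h1 := (hc_lt (c - 1) (by omega)).2
    have h2 := hA (show i ≤ c - 1 by omega)
    simp only [betaP] at h1
    omega
  have hconj : conjP lam ℓ j = c := by
    have hcℓ : c ≤ ℓ := by
      by_contra h
      exact absurd (hc_lt ℓ (by omega)).1 (lt_irrefl ℓ)
    rw [conjP, show (range ℓ).filter (fun i => j < lam i) = range c from ?_, card_range]
    ext i
    simp only [mem_filter, mem_range]
    refine ⟨fun ⟨_, hji⟩ => ?_, fun hi => ⟨by omega, hj_lt i hi⟩⟩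
    by_contra h
    have := hA (not_lt.1 h)
    omega
  refine ⟨j, hj_lt k hkc, ?_⟩
  simp only [hookP, hconj, betaP]
  omega

lemma IsCore.isBead_sub (hcore : IsCore n lam ℓ) {v : ℤ} (hv : IsBead lam ℓ v) :
    IsBead lam ℓ (v - n) := by
  by_contra hnb
  rcases Nat.eq_zero_or_pos n with rfl | hn
  · exact hnb (by simpa using hv)
  have hvn : 0 ≤ v - n := by
    by_contra h
    exact hnb (Or.inl (by omega))
  obtain ⟨k, hk, rfl⟩ := hv.resolve_left (by omega)
  obtain ⟨j, hj, hhook⟩ :=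
    exists_hookP_eq_betaP_sub hcore.1 hcore.2.1 hk hvn (by omega) hnb
  exact hcore.2.2 k j hk hj ⟨1, by rw [hhook]; ring⟩

lemma IsCore.isBead_sub_mul (hcore : IsCore n lam ℓ) {v : ℤ} (hv : IsBead lam ℓ v) (d : ℕ) :
    IsBead lam ℓ (v - d * n) := by
  induction d with
  | zero => simpa using hv
  | succ d ih => simpa [add_mul, sub_add_eq_sub_sub] using hcore.isBead_sub ih

lemma IsCore.isBead_iff_lt_bvec (hcore : IsCore n lam ℓ) {r : ℕ} (hr : r < n) (s : ℕ) :
    IsBead lam ℓ (s * n + r) ↔ s < bvec n lam ℓ r := by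
  have hdiv : ∀ k < ℓ, ∀ s : ℕ, betaP lam ℓ k = s * n + r ↔
      (betaP lam ℓ k / n).toNat = s ∧ betaP lam ℓ k % n = r := fun k hk =>
    Int.eq_mul_add_iff_toNat_ediv (betaP_pos hcore.2.1 hk).le hr
  set T := (range ℓ).filter (fun k => betaP lam ℓ k % n = r)
  set S := T.image (fun k => (betaP lam ℓ k / n).toNat)
  have hmem : ∀ s : ℕ, s ∈ S ↔ IsBead lam ℓ (s * n + r) := by
    intro s
    simp only [S, T, mem_image, mem_filter, mem_range, IsBead]
    constructor
    · rintro ⟨k, ⟨hk, hkr⟩, hks⟩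
      exact Or.inr ⟨k, hk, (hdiv k hk s).2 ⟨hks, hkr⟩⟩
    · rintro (h | ⟨k, hk, hks⟩)
      · exact absurd h (not_lt.2 (by positivity))
      · exact ⟨k, ⟨hk, ((hdiv k hk s).1 hks).2⟩, ((hdiv k hk s).1 hks).1⟩
  have hcard : #S = bvec n lam ℓ r := by
    refine card_image_of_injOn fun a ha b hb hab => (betaP_strictAnti (ℓ := ℓ) hcore.1).injective ?_
    simp only [T, mem_coe, mem_filter, mem_range] at ha hb
    rw [(hdiv a ha.1 _).2 ⟨rfl, ha.2⟩, (hdiv b hb.1 _).2 ⟨rfl, hb.2⟩]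
    exact_mod_cast congrArg (fun s : ℕ => (s : ℤ) * n + r) hab
  have hlower : IsLowerSet (S : Set ℕ) := fun b a hab hb => by
    rw [mem_coe, hmem] at hb ⊢
    convert hcore.isBead_sub_mul hb (b - a) using 1
    push_cast [hab]
    ring
  rw [← hmem, mem_iff_lt_card_of_isLowerSet hlower, hcard]

end Abacus

section FirstGap

variable {n : ℕ} {lam : ℕ → ℕ} {ℓ : ℕ}

def firstGap (n : ℕ) (lam : ℕ → ℕ) (ℓ r : ℕ) : ℕ := bvec n lam ℓ r * n + r

lemma firstGap_mod {r : ℕ} (hr : r < n) : firstGap n lam ℓ r % n = r := by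
  rw [firstGap, add_comm, Nat.add_mul_mod_self_right, Nat.mod_eq_of_lt hr]

lemma IsCore.isBead_firstGap_sub (hcore : IsCore n lam ℓ) {r : ℕ} (hr : r < n) :
    IsBead lam ℓ (firstGap n lam ℓ r - n) := by
  rcases Nat.eq_zero_or_pos (bvec n lam ℓ r) with h | h
  · exact Or.inl (by simp [firstGap, h]; omega)
  · convert (hcore.isBead_iff_lt_bvec hr (bvec n lam ℓ r - 1)).2 (by omega) using 1
    simp only [firstGap]
    push_cast [Nat.cast_sub h]
    ring

lemma IsCore.isBead_betaP_zero (hcore : IsCore n lam ℓ) : IsBead lam ℓ (betaP lam ℓ 0) := by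
  rcases Nat.eq_zero_or_pos ℓ with rfl | hℓ
  · have := (hcore.2.1 0).not.2 (lt_irrefl 0)
    exact Or.inl (by simp only [betaP]; omega)
  · exact Or.inr ⟨0, hℓ, rfl⟩

lemma not_isBead_of_betaP_zero_lt (hA : Antitone lam) {v : ℤ} (hv : betaP lam ℓ 0 < v) :
    ¬IsBead lam ℓ v := by
  rintro (h | ⟨k, -, rfl⟩)
  · simp only [betaP] at hv
    omega
  · exact absurd ((betaP_strictAnti hA).antitone (Nat.zero_le k)) (not_le.2 hv)

lemma IsCore.bvec_zero (hcore : IsCore n lam ℓ) (hn : 0 < n) : bvec n lam ℓ 0 = 0 := by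
  by_contra h
  rcases (hcore.isBead_iff_lt_bvec hn 0).2 (by omega) with h0 | ⟨k, hk, hk0⟩
  · simp at h0
  · have := betaP_pos hcore.2.1 hk
    simp at hk0
    omega

lemma IsCore.firstGap_le (hcore : IsCore n lam ℓ) {r : ℕ} (hr : r < n) :
    (firstGap n lam ℓ r : ℤ) ≤ betaP lam ℓ 0 + n := by
  by_contra h
  exact not_isBead_of_betaP_zero_lt hcore.1 (by omega) (hcore.isBead_firstGap_sub hr)

lemma IsCore.exists_firstGap_eq (hcore : IsCore n lam ℓ) (hn : 0 < n) :
    ∃ r < n, (firstGap n lam ℓ r : ℤ) = betaP lam ℓ 0 + n := by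
  have hβ : -1 ≤ betaP lam ℓ 0 := by simp only [betaP]; omega
  obtain ⟨N, hN⟩ : ∃ N : ℕ, (N : ℤ) = betaP lam ℓ 0 + n := ⟨(betaP lam ℓ 0 + n).toNat, by omega⟩
  have hdecomp : ((N / n : ℕ) : ℤ) * n + (N % n : ℕ) = N := by
    exact_mod_cast Nat.div_add_mod' N n
  refine ⟨N % n, Nat.mod_lt N hn, ?_⟩
  suffices bvec n lam ℓ (N % n) = N / n by
    rw [← hN, firstGap, this]
    exact_mod_cast Nat.div_add_mod' N n
  have hgap := (hcore.isBead_iff_lt_bvec (Nat.mod_lt N hn) (N / n)).not.1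
    (not_isBead_of_betaP_zero_lt hcore.1 (by omega))
  refine le_antisymm (by omega) ?_
  rcases Nat.eq_zero_or_pos (N / n) with h0 | h0
  · omega
  · have := (hcore.isBead_iff_lt_bvec (Nat.mod_lt N hn) (N / n - 1)).1 <| by
      convert hcore.isBead_betaP_zero using 1
      rw [Nat.cast_sub h0, Nat.cast_one]
      linarith
    omega

end FirstGap

section Psort

variable {n : ℕ} {lam : ℕ → ℕ} {ℓ : ℕ}

lemma psort_eq_sort_image_firstGap :
    psort n lam ℓ = ((range n).image (firstGap n lam ℓ)).sort (· ≤ ·) := rfl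

lemma firstGap_injOn : Set.InjOn (firstGap n lam ℓ) (range n) := fun a ha b hb hab => by
  rw [mem_coe, mem_range] at ha hb
  rw [← firstGap_mod (lam := lam) (ℓ := ℓ) ha, ← firstGap_mod (lam := lam) (ℓ := ℓ) hb, hab]

lemma length_psort : (psort n lam ℓ).length = n := by
  rw [psort_eq_sort_image_firstGap, length_sort, card_image_of_injOn firstGap_injOn, card_range]

lemma mem_psort {v : ℕ} : v ∈ psort n lam ℓ ↔ ∃ r < n, firstGap n lam ℓ r = v := by
  simp [psort_eq_sort_image_firstGap]

lemma psort_getD_lt_getD {i j : ℕ} (hij : i < j) (hj : j < n) :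
    (psort n lam ℓ).getD i 0 < (psort n lam ℓ).getD j 0 := by
  have hlen : j < (psort n lam ℓ).length := hj.trans_eq length_psort.symm
  rw [List.getD_eq_getElem _ _ (hij.trans hlen), List.getD_eq_getElem _ _ hlen]
  exact List.pairwise_iff_getElem.1 (List.sortedLT_iff_pairwise.1 (sortedLT_sort _)) i j _ _ hij

lemma psort_getD_le_getD {i j : ℕ} (hij : i ≤ j) (hj : j < n) :
    (psort n lam ℓ).getD i 0 ≤ (psort n lam ℓ).getD j 0 := by
  rcases hij.eq_or_lt with rfl | h
  · exact le_rfl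
  · exact (psort_getD_lt_getD h hj).le

lemma exists_firstGap_eq_psort_getD {i : ℕ} (hi : i < n) :
    ∃ r < n, firstGap n lam ℓ r = (psort n lam ℓ).getD i 0 := by
  have hlen : i < (psort n lam ℓ).length := hi.trans_eq length_psort.symm
  rw [List.getD_eq_getElem _ _ hlen]
  exact mem_psort.1 (List.getElem_mem hlen)

lemma exists_psort_getD_eq_firstGap {r : ℕ} (hr : r < n) :
    ∃ i < n, (psort n lam ℓ).getD i 0 = firstGap n lam ℓ r := by
  obtain ⟨i, hi, h⟩ := List.mem_iff_getElem.1 (mem_psort.2 ⟨r, hr, rfl⟩)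
  exact ⟨i, hi.trans_eq length_psort, by rw [List.getD_eq_getElem _ _ hi, h]⟩

lemma psort_getD_mod_ne {i j : ℕ} (hi : i < n) (hj : j < n) (hij : i ≠ j) :
    (psort n lam ℓ).getD i 0 % n ≠ (psort n lam ℓ).getD j 0 % n := by
  obtain ⟨ri, hri, hvi⟩ := exists_firstGap_eq_psort_getD (lam := lam) (ℓ := ℓ) hi
  obtain ⟨rj, hrj, hvj⟩ := exists_firstGap_eq_psort_getD (lam := lam) (ℓ := ℓ) hj
  rw [← hvi, ← hvj, firstGap_mod hri, firstGap_mod hrj]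
  rintro rfl
  rcases Nat.lt_or_gt_of_ne hij with h | h
  · exact (psort_getD_lt_getD h hj).ne (hvi.symm.trans hvj)
  · exact (psort_getD_lt_getD h hi).ne (hvj.symm.trans hvi)

lemma IsCore.psort_getD_zero (hcore : IsCore n lam ℓ) (hn : 0 < n) :
    (psort n lam ℓ).getD 0 0 = 0 := by
  obtain ⟨i, hi, h⟩ := exists_psort_getD_eq_firstGap (lam := lam) (ℓ := ℓ) hn
  rw [firstGap, hcore.bvec_zero hn, zero_mul, add_zero] at h
  have := psort_getD_le_getD (lam := lam) (ℓ := ℓ) (Nat.zero_le i) hi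
  omega

lemma IsCore.psort_getD_last (hcore : IsCore n lam ℓ) (hn : 0 < n) :
    ((psort n lam ℓ).getD (n - 1) 0 : ℤ) = betaP lam ℓ 0 + n := by
  obtain ⟨r, hr, hlast⟩ :=
    exists_firstGap_eq_psort_getD (lam := lam) (ℓ := ℓ) (show n - 1 < n by omega)
  obtain ⟨r₀, hr₀, hmax⟩ := hcore.exists_firstGap_eq hn
  obtain ⟨i, hi, hi₀⟩ := exists_psort_getD_eq_firstGap (lam := lam) (ℓ := ℓ) hr₀
  have hle := psort_getD_le_getD (n := n) (lam := lam) (ℓ := ℓ) (show i ≤ n - 1 by omega) (by omega)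
  rw [hi₀, ← hlast] at hle
  rw [← hlast]
  have := hcore.firstGap_le hr
  omega

end Psort

/-- `H_{θ,m}` is a separating wall for a dominant `m`-Shi region `R` iff the
`n`-core `λ` with `Ψ(λ)` the `m`-minimal alcove of `R` satisfies `h_{11} = n(m-1)+1`. -/
theorem theta_sepwall_iff_hook (n m : ℕ) (hn : 2 ≤ n) (hm : 1 ≤ m)
    (lam : ℕ → ℕ) (ℓ : ℕ) (hcore : IsCore n lam ℓ)
    (x : ℕ → ℝ) (e : ℕ → ℕ → ℤ) (hx : RegionPoint n m x) (he : TabOf n m x e)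
    (hmin : MinAlcRel n m e (kOf n lam ℓ)) :
    SepWall n m x 0 (n - 2) ↔ (lam 0 : ℤ) + ℓ - 1 = n * ((m : ℤ) - 1) + 1 := by
  have hn0 : 0 < n := by omega
  rw [sepWall_theta_iff_sepCrit hn hm hx he, hmin.sepCrit_theta_iff hn]
  set p : ℕ → ℤ := fun i => ((psort n lam ℓ).getD i 0 : ℤ)
  have hp0 : p 0 = 0 := by simp only [p, hcore.psort_getD_zero hn0, Nat.cast_zero]
  have hres : ∀ i < n, ∀ j < n, i ≠ j → p i % n ≠ p j % n := fun i hi j hj hij => by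
    simp only [p]
    exact_mod_cast psort_getD_mod_ne (lam := lam) (ℓ := ℓ) hi hj hij
  have hone : ∃ i < n, p i % n = 1 := by
    obtain ⟨i, hi, h⟩ := exists_psort_getD_eq_firstGap (lam := lam) (ℓ := ℓ) (show 1 < n by omega)
    exact ⟨i, hi, by simp only [p, h]; exact_mod_cast firstGap_mod (show 1 < n by omega)⟩
  have hk : ∀ i j, kOf n lam ℓ i j = (p (j + 1) - p i) / n := fun _ _ => rfl
  simp only [hk, hp0, sub_zero, show n - 2 + 1 = n - 1 by omega]
  rw [theta_coords_iff hn m p hp0 hres hone, show p (n - 1) = _ from hcore.psort_getD_last hn0]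
  simp only [betaP, Nat.cast_zero, sub_zero]
  constructor <;> intro h <;> linarith

end Shi
end
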